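/- Let R be a ring. If every right R-module is regularly weakly based, then R is right perfect; that is, for each sequence (r_n | n ∈ ℕ) of elements of R there is n₀ ∈ ℕ such that for all n ≥ n₀ there is j ≥ 1 with r_{n+j} ⋯ r_{n+1} R = r_{n+j} ⋯ r_{n+1} r_n R. -/

import Mathlib

/-!
Let `M` be Bass's module `lim (R → R → ⋯)` along left multiplication by `r 1, r 2, …`, with
`x n` the image of `1` from the `n`-th copy. Since `x i = x j · r_j ⋯ r_{i+1}` for `i ≤ j`, the
generators `x n` span a chain of cyclic submodules, so a weak basis inside `{x n}` has at most
one element and `M = x p R`. For `n > p` this gives `x n = x p a = x n · r_n c`, i.e.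
`x n (1 - r_n c) = 0`; in a direct limit this means `r_{n+j} ⋯ r_{n+1} (1 - r_n c) = 0` for some
`j`, which is the required equality of principal right ideals.
-/

/-- A weak basis of a module: a weakly independent generating set. -/
def IsWeakBasis (R : Type*) [Semiring R] {M : Type*} [AddCommMonoid M]
    [Module R M] (X : Set M) : Prop :=
  (∀ x ∈ X, x ∉ Submodule.span R (X \ {x})) ∧ Submodule.span R X = ⊤

/-- A module is regularly weakly based if every generating set contains a weak basis. -/
def RegularlyWeaklyBased (R : Type*) [Semiring R] (M : Type*) [AddCommMonoid M]
    [Module R M] : Prop :=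
  ∀ X : Set M, Submodule.span R X = ⊤ → ∃ W ⊆ X, IsWeakBasis R W

/-- `seqProd r n j = r (n + j) * ⋯ * r (n + 1)` (and `1` for `j = 0`). -/
def seqProd {R : Type*} [Ring R] (r : ℕ → R) (n : ℕ) : ℕ → R
  | 0 => 1
  | j + 1 => r (n + j + 1) * seqProd r n j

open MulOpposite Submodule

theorem subsingleton_of_weaklyIndependent_of_chain {R M : Type*} [Semiring R] [AddCommMonoid M]
    [Module R M] {W : Set M} (hW : ∀ x ∈ W, x ∉ span R (W \ {x}))
    (hchain : ∀ x ∈ W, ∀ y ∈ W, x ∈ span R {y} ∨ y ∈ span R {x}) : W.Subsingleton := by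
  have key : ∀ x ∈ W, ∀ y ∈ W, x ∈ span R {y} → x = y := fun x hx y hy hxy => by
    by_contra hne
    have hy' : y ∈ W \ {x} := ⟨hy, Ne.symm hne⟩
    exact hW x hx (span_mono (Set.singleton_subset_iff.mpr hy') hxy)
  intro x hx y hy
  rcases hchain x hx y hy with hxy | hyx
  exacts [key x hx y hy hxy, (key y hy x hx hyx).symm]

theorem RegularlyWeaklyBased.exists_span_singleton_eq_top {R M ι : Type*} [Semiring R]
    [AddCommMonoid M] [Module R M] [Nonempty ι] (hM : RegularlyWeaklyBased R M) (g : ι → M)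
    (hg : span R (Set.range g) = ⊤)
    (hchain : ∀ i j, g i ∈ span R {g j} ∨ g j ∈ span R {g i}) :
    ∃ i, span R {g i} = ⊤ := by
  obtain ⟨W, hWg, hW, hWspan⟩ := hM _ hg
  have hsub : W.Subsingleton := subsingleton_of_weaklyIndependent_of_chain hW fun x hx y hy => by
    obtain ⟨i, rfl⟩ := hWg hx
    obtain ⟨j, rfl⟩ := hWg hy
    exact hchain i j
  rcases hsub.eq_empty_or_singleton with rfl | ⟨_, rfl⟩
  · rw [span_empty] at hWspan
    exact ⟨Classical.arbitrary ι, top_unique (hWspan ▸ bot_le)⟩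
  · obtain ⟨i, rfl⟩ := hWg rfl
    exact ⟨i, hWspan⟩

section seqProd

variable {R : Type*} [Ring R] (r : ℕ → R)

theorem seqProd_add (i a b : ℕ) : seqProd r (i + a) b * seqProd r i a = seqProd r i (a + b) := by
  induction b with
  | zero => exact one_mul _
  | succ b ih =>
    rw [seqProd, mul_assoc, ih, ← add_assoc, seqProd, add_assoc i a b]

theorem seqProd_sub_mul_seqProd_sub {i j k : ℕ} (hij : i ≤ j) (hjk : j ≤ k) :
    seqProd r j (k - j) * seqProd r i (j - i) = seqProd r i (k - i) := by
  obtain ⟨a, rfl⟩ := Nat.exists_eq_add_of_le hij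
  obtain ⟨b, rfl⟩ := Nat.exists_eq_add_of_le hjk
  rw [Nat.add_sub_cancel_left, Nat.add_sub_cancel_left, add_assoc, Nat.add_sub_cancel_left,
    seqProd_add]

end seqProd

section

variable {R : Type*} [Ring R] (r : ℕ → R)

noncomputable def BassModule.transition (i j : ℕ) (_ : i ≤ j) : R →ₗ[Rᵐᵒᵖ] R :=
  LinearMap.mulLeft Rᵐᵒᵖ (seqProd r i (j - i))

open BassModule in
instance : DirectedSystem (fun _ : ℕ => R) (transition r · · ·) where
  map_self i x := by simp [transition, seqProd]
  map_map {i j k} hij hjk x := by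
    simp [transition, ← mul_assoc, seqProd_sub_mul_seqProd_sub r hij hjk]

abbrev BassModule : Type _ := Module.DirectLimit (fun _ : ℕ => R) (BassModule.transition r)

namespace BassModule

noncomputable def gen (n : ℕ) : BassModule r := Module.DirectLimit.of Rᵐᵒᵖ ℕ _ _ n 1

theorem of_eq_smul_gen (n : ℕ) (y : R) :
    Module.DirectLimit.of Rᵐᵒᵖ ℕ _ (transition r) n y = op y • gen r n := by
  rw [gen, ← map_smul, op_smul_eq_mul, one_mul]

theorem gen_eq_smul_gen (i k : ℕ) : gen r i = op (seqProd r i k) • gen r (i + k) := by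
  rw [← of_eq_smul_gen, gen, ← Module.DirectLimit.of_f (hij := Nat.le_add_right i k)]
  simp [transition]

theorem span_range_gen : span Rᵐᵒᵖ (Set.range (gen r)) = ⊤ := by
  refine eq_top_iff.mpr fun z _ => ?_
  obtain ⟨n, y, rfl⟩ := Module.DirectLimit.exists_of z
  rw [of_eq_smul_gen]
  exact smul_mem _ _ (subset_span ⟨n, rfl⟩)

theorem gen_mem_span_gen {i j : ℕ} (hij : i ≤ j) : gen r i ∈ span Rᵐᵒᵖ {gen r j} := by
  obtain ⟨k, rfl⟩ := Nat.exists_eq_add_of_le hij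
  rw [gen_eq_smul_gen r i k]
  exact smul_mem _ _ (mem_span_singleton_self _)

theorem exists_seqProd_mul_eq_zero {n : ℕ} {y : R} (hy : op y • gen r n = 0) :
    ∃ j, seqProd r n j * y = 0 := by
  rw [← of_eq_smul_gen] at hy
  obtain ⟨k, hnk, hk⟩ := Module.DirectLimit.of.zero_exact hy
  exact ⟨k - n, hk⟩

end BassModule

end

theorem setOf_mul_eq_of_eq_mul_mul {R : Type*} [Semigroup R] {a b c : R} (h : a = a * b * c) :
    {x : R | ∃ s, x = a * s} = {x : R | ∃ s, x = a * b * s} := by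
  ext x
  constructor
  · rintro ⟨s, rfl⟩
    exact ⟨c * s, by rw [← mul_assoc, ← h]⟩
  · rintro ⟨s, rfl⟩
    exact ⟨b * s, mul_assoc a b s⟩

theorem rightPerfect_of_forall_regularlyWeaklyBased.{u}
    (R : Type u) [Ring R]
    (h : ∀ (M : Type u) [AddCommGroup M] [Module Rᵐᵒᵖ M], RegularlyWeaklyBased Rᵐᵒᵖ M) :
    ∀ r : ℕ → R, ∃ n₀ : ℕ, ∀ n ≥ n₀, ∃ j, 1 ≤ j ∧
      {x : R | ∃ s : R, x = seqProd r n j * s} =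
        {x : R | ∃ s : R, x = seqProd r n j * r n * s} := by
  intro r
  obtain ⟨p, hp⟩ := (h (BassModule r)).exists_span_singleton_eq_top (BassModule.gen r)
    (BassModule.span_range_gen r) fun i j =>
      (le_total i j).imp (BassModule.gen_mem_span_gen r) (BassModule.gen_mem_span_gen r)
  refine ⟨p + 1, fun n hn => ?_⟩
  obtain ⟨m, rfl⟩ : ∃ m, n = p + (m + 1) := ⟨n - p - 1, by omega⟩
  have hgen_mem : BassModule.gen r (p + (m + 1)) ∈ span Rᵐᵒᵖ {BassModule.gen r p} :=
    hp ▸ mem_top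
  obtain ⟨a, ha⟩ := mem_span_singleton.mp hgen_mem
  set n := p + (m + 1)
  set c := seqProd r p m * unop a
  have hfix : op (1 - r n * c) • BassModule.gen r n = 0 := by
    have hgen : BassModule.gen r n = op (r n * c) • BassModule.gen r n := by
      conv_lhs => rw [← ha, BassModule.gen_eq_smul_gen r p (m + 1), smul_smul, seqProd]
      simp only [c, n, op_mul, op_unop, mul_assoc, add_assoc]
    rw [op_sub, op_one, sub_smul, one_smul, ← hgen, sub_self]
  obtain ⟨j, hj⟩ := BassModule.exists_seqProd_mul_eq_zero r hfix
  rw [mul_sub, mul_one, sub_eq_zero, ← mul_assoc] at hj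
  refine ⟨j + 1, le_add_self, setOf_mul_eq_of_eq_mul_mul (c := c) ?_⟩
  conv_lhs => rw [seqProd, hj]
  simp only [seqProd, mul_assoc]
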